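/- arXiv:1112.0158 — 8 statements merged into one kernel-verified Lean document; each statement's English description precedes it below -/
import Mathlib

section
/- Let {φ_i}_{i=1}^M be an ε-Riesz sequence in a complex Hilbert space (0 < ε < 1), and let {I_1, I_2} be a partition of {1,2,…,M}. If φ ∈ span{φ_i : i ∈ I_1} and ψ ∈ span{φ_i : i ∈ I_2} are unit vectors, then |⟨φ, ψ⟩| ≤ 2ε(1 + ε/2). -/
/-!
Rotate `y` by a unimodular scalar `c` so that `⟪x, c • y⟫ = |⟪x, y⟫| =: t`. Since `x` and `c • y`
have coefficient vectors `a`, `b` with disjoint supports, `a + b` and `a - b` have the same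
`ℓ²`-norm `S`, so the two Riesz bounds give
`2 + 2t = ‖x + c • y‖² ≤ (1 + ε) S ≤ (1 + ε)² ‖x - c • y‖² = (1 + ε)² (2 - 2t)`,
which forces `t ≤ (1 + ε)² - 1 = 2ε(1 + ε/2)`.
-/

section Riesz

variable {𝕜 ι E : Type*} [NormedField 𝕜] [Fintype ι] [SeminormedAddCommGroup E] [NormedSpace 𝕜 E]

variable (𝕜) in
def IsEpsRieszSequence (φ : ι → E) (ε : ℝ) : Prop :=
  ∀ a : ι → 𝕜,
    (1 / (1 + ε)) * ∑ i, ‖a i‖ ^ 2 ≤ ‖∑ i, a i • φ i‖ ^ 2 ∧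
    ‖∑ i, a i • φ i‖ ^ 2 ≤ (1 + ε) * ∑ i, ‖a i‖ ^ 2

theorem exists_sum_smul_eq_of_mem_span_image {φ : ι → E} {I : Finset ι} {x : E}
    (hx : x ∈ Submodule.span 𝕜 (φ '' ↑I)) :
    ∃ a : ι → 𝕜, (∀ i ∉ I, a i = 0) ∧ ∑ i, a i • φ i = x := by
  obtain ⟨l, hl, rfl⟩ := (Finsupp.mem_span_image_iff_linearCombination 𝕜).1 hx
  refine ⟨l, fun i hi => (Finsupp.mem_supported' 𝕜 l).1 hl i (by simpa using hi), ?_⟩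
  rw [Finsupp.linearCombination_apply, Finsupp.sum_fintype _ _ (fun i => zero_smul 𝕜 (φ i))]

theorem sum_norm_add_sq_eq_sum_norm_sub_sq {a b : ι → 𝕜} (hab : ∀ i, a i = 0 ∨ b i = 0) :
    ∑ i, ‖a i + b i‖ ^ 2 = ∑ i, ‖a i - b i‖ ^ 2 := by
  refine Finset.sum_congr rfl fun i _ => ?_
  rcases hab i with h | h <;> simp [h]

theorem IsEpsRieszSequence.norm_add_sq_le_mul_norm_sub_sq {φ : ι → E} {ε : ℝ}
    (hφ : IsEpsRieszSequence 𝕜 φ ε) (hε : 0 < 1 + ε) {I₁ I₂ : Finset ι} (hdisj : Disjoint I₁ I₂)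
    {u v : E} (hu : u ∈ Submodule.span 𝕜 (φ '' ↑I₁)) (hv : v ∈ Submodule.span 𝕜 (φ '' ↑I₂)) :
    ‖u + v‖ ^ 2 ≤ (1 + ε) ^ 2 * ‖u - v‖ ^ 2 := by
  obtain ⟨a, ha, rfl⟩ := exists_sum_smul_eq_of_mem_span_image hu
  obtain ⟨b, hb, rfl⟩ := exists_sum_smul_eq_of_mem_span_image hv
  have hab : ∀ i, a i = 0 ∨ b i = 0 := fun i =>
    (em (i ∈ I₁)).elim (fun hi => .inr (hb i (Finset.disjoint_left.1 hdisj hi))) (.inl ∘ ha i)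
  have hupper := (hφ (a + b)).2
  have hlower := (hφ (a - b)).1
  simp only [Pi.add_apply, Pi.sub_apply, add_smul, sub_smul, Finset.sum_add_distrib,
    Finset.sum_sub_distrib, ← sum_norm_add_sq_eq_sum_norm_sub_sq hab] at hupper hlower
  rw [one_div, inv_mul_le_iff₀ hε] at hlower
  calc _ ≤ (1 + ε) * ∑ i, ‖a i + b i‖ ^ 2 := hupper
    _ ≤ (1 + ε) * ((1 + ε) * ‖∑ i, a i • φ i - ∑ i, b i • φ i‖ ^ 2) := by gcongr
    _ = _ := by ring

end Riesz

theorem re_inner_mul_le_of_norm_add_sq_le_mul_norm_sub_sq {𝕜 E : Type*} [RCLike 𝕜]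
    [NormedAddCommGroup E] [InnerProductSpace 𝕜 E] {u v : E} (hu : ‖u‖ = 1) (hv : ‖v‖ = 1)
    {K : ℝ} (h : ‖u + v‖ ^ 2 ≤ K * ‖u - v‖ ^ 2) :
    RCLike.re (inner 𝕜 u v) * (K + 1) ≤ K - 1 := by
  rw [norm_add_sq (𝕜 := 𝕜), norm_sub_sq (𝕜 := 𝕜), hu, hv] at h
  linarith

theorem rip_nearly_orthogonal_spans_general {H : Type*} [NormedAddCommGroup H]
    [InnerProductSpace ℂ H]
    {M : ℕ} (φ : Fin M → H) (ε : ℝ) (hε0 : 0 < ε)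
    (hRiesz : ∀ a : Fin M → ℂ,
      (1 / (1 + ε)) * ∑ i, ‖a i‖ ^ 2 ≤ ‖∑ i, a i • φ i‖ ^ 2 ∧
      ‖∑ i, a i • φ i‖ ^ 2 ≤ (1 + ε) * ∑ i, ‖a i‖ ^ 2)
    (I₁ I₂ : Finset (Fin M)) (hdisj : Disjoint I₁ I₂)
    (x y : H)
    (hx : x ∈ Submodule.span ℂ (φ '' ↑I₁)) (hy : y ∈ Submodule.span ℂ (φ '' ↑I₂))
    (hx1 : ‖x‖ = 1) (hy1 : ‖y‖ = 1) :
    ‖(inner ℂ x y : ℂ)‖ ≤ 2 * ε * (1 + ε / 2) := by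
  obtain ⟨c, hc, hcz⟩ := Complex.exists_norm_eq_mul_self (inner ℂ x y)
  have hcy : ‖c • y‖ = 1 := by rw [norm_smul, hc, hy1, one_mul]
  have hre : RCLike.re (inner ℂ x (c • y)) = ‖(inner ℂ x y : ℂ)‖ := by
    rw [inner_smul_right, ← hcz]
    exact Complex.ofReal_re _
  have hsq := (show IsEpsRieszSequence ℂ φ ε from hRiesz).norm_add_sq_le_mul_norm_sub_sq
    (by linarith) hdisj hx (Submodule.smul_mem _ c hy)
  have hbound := re_inner_mul_le_of_norm_add_sq_le_mul_norm_sub_sq (𝕜 := ℂ) hx1 hcy hsq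
  rw [hre] at hbound
  nlinarith [norm_nonneg (inner ℂ x y : ℂ), sq_nonneg (1 + ε)]

/-- Unit vectors in the spans of two complementary blocks of an
ε-Riesz sequence are nearly orthogonal: |⟨φ,ψ⟩| ≤ 2ε(1+ε/2). -/
theorem rip_nearly_orthogonal_spans {H : Type*} [NormedAddCommGroup H]
    [InnerProductSpace ℂ H]
    {M : ℕ} (φ : Fin M → H) (ε : ℝ) (hε0 : 0 < ε) (hε1 : ε < 1)
    (hRiesz : ∀ a : Fin M → ℂ,
      (1 / (1 + ε)) * ∑ i, ‖a i‖ ^ 2 ≤ ‖∑ i, a i • φ i‖ ^ 2 ∧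
      ‖∑ i, a i • φ i‖ ^ 2 ≤ (1 + ε) * ∑ i, ‖a i‖ ^ 2)
    (I₁ I₂ : Finset (Fin M)) (hdisj : Disjoint I₁ I₂) (hcover : I₁ ∪ I₂ = Finset.univ)
    (x y : H)
    (hx : x ∈ Submodule.span ℂ (φ '' ↑I₁)) (hy : y ∈ Submodule.span ℂ (φ '' ↑I₂))
    (hx1 : ‖x‖ = 1) (hy1 : ‖y‖ = 1) :
    ‖(inner ℂ x y : ℂ)‖ ≤ 2 * ε * (1 + ε / 2) :=
  rip_nearly_orthogonal_spans_general φ ε hε0 hRiesz I₁ I₂ hdisj x y hx hy hx1 hy1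
end

section
/- Let {φ_i}_{i=1}^M be a unit norm tight frame for an N-dimensional complex Hilbert space H_N which has the restricted isometry property with constant ε (0 < ε < 1) for sets of size s. Let {I_j}_{j=1}^K be a partition of {1,2,…,M} with |I_j| ≤ s for every j, let W_j = span{φ_i : i ∈ I_j}, and let P_j be the orthogonal projection onto W_j. Then for every φ ∈ H_N: (M/((1+ε)N)) ‖φ‖² ≤ Σ_{j=1}^K ‖P_j φ‖² ≤ ((1+ε)M/N) ‖φ‖²; that is, {(W_j, 1)}_{j=1}^K is a fusion frame with bounds M/((1+ε)N) and M(1+ε)/N. -/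
/-!
Within a block `I j`, the inner products `⟪φ i, x⟫` only see the projection `P j x`, and the RIP
bounds for the synthesis map `a ↦ ∑ i ∈ I j, a i • φ i` transfer to its adjoint
`y ↦ (⟪φ i, y⟫)ᵢ` on the block span, so `∑ i ∈ I j, ‖⟪φ i, x⟫‖²` lies between `‖P j x‖² / (1 + ε)`
and `(1 + ε) ‖P j x‖²`. Summing over the partition and using tightness gives the fusion frame
bounds.
-/

open Finset

theorem Finset.sum_sum_eq_sum_of_partition {ι κ M : Type*} [Fintype ι] [Fintype κ]
    [DecidableEq ι] [AddCommMonoid M] (I : κ → Finset ι)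
    (hdisj : ∀ j k, j ≠ k → Disjoint (I j) (I k)) (hcover : ∀ i, ∃ j, i ∈ I j) (f : ι → M) :
    ∑ j, ∑ i ∈ I j, f i = ∑ i, f i := by
  have huniv : (univ : Finset ι) = univ.biUnion I := by
    ext i
    simpa using hcover i
  rw [huniv, sum_biUnion fun j _ k _ hjk ↦ hdisj j k hjk]

section FrameBounds

variable {𝕜 E ι : Type*} [RCLike 𝕜] [NormedAddCommGroup E] [InnerProductSpace 𝕜 E]
  {φ : ι → E} {J : Finset ι}

theorem sum_norm_inner_sq_le_of_norm_sum_sq_le {B : ℝ} (hB : 0 ≤ B)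
    (h : ∀ a : ι → 𝕜, ‖∑ i ∈ J, a i • φ i‖ ^ 2 ≤ B * ∑ i ∈ J, ‖a i‖ ^ 2) (y : E) :
    ∑ i ∈ J, ‖(inner 𝕜 (φ i) y : 𝕜)‖ ^ 2 ≤ B * ‖y‖ ^ 2 := by
  set a : ι → 𝕜 := fun i ↦ inner 𝕜 (φ i) y
  set S := ∑ i ∈ J, ‖a i‖ ^ 2
  have hS : 0 ≤ S := sum_nonneg fun i _ ↦ sq_nonneg _
  have hinner : (inner 𝕜 (∑ i ∈ J, a i • φ i) y : 𝕜) = S := by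
    simp only [sum_inner, inner_smul_left, S, RCLike.ofReal_sum, RCLike.ofReal_pow]
    exact sum_congr rfl fun i _ ↦ RCLike.conj_mul (a i)
  have hCS : S ≤ ‖∑ i ∈ J, a i • φ i‖ * ‖y‖ := by
    simpa [hinner, abs_of_nonneg hS] using norm_inner_le_norm (𝕜 := 𝕜) (∑ i ∈ J, a i • φ i) y
  have hsq : S * S ≤ S * (B * ‖y‖ ^ 2) :=
    calc S * S ≤ (‖∑ i ∈ J, a i • φ i‖ * ‖y‖) ^ 2 := by rw [← sq]; exact pow_le_pow_left₀ hS hCS 2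
      _ ≤ B * S * ‖y‖ ^ 2 := by rw [mul_pow]; gcongr; exact h a
      _ = S * (B * ‖y‖ ^ 2) := by ring
  rcases hS.eq_or_lt with hS0 | hSpos
  · rw [← hS0]; positivity
  · exact le_of_mul_le_mul_left hsq hSpos

theorem norm_sq_le_mul_sum_norm_inner_sq_of_mem_span {C : ℝ}
    (h : ∀ a : ι → 𝕜, ∑ i ∈ J, ‖a i‖ ^ 2 ≤ C * ‖∑ i ∈ J, a i • φ i‖ ^ 2) {y : E}
    (hy : y ∈ Submodule.span 𝕜 (φ '' ↑J)) :
    ‖y‖ ^ 2 ≤ C * ∑ i ∈ J, ‖(inner 𝕜 (φ i) y : 𝕜)‖ ^ 2 := by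
  obtain ⟨a, ha⟩ := (Submodule.mem_span_image_finset_iff_exists_fun' 𝕜).mp hy
  set S := ∑ i ∈ J, ‖(inner 𝕜 (φ i) y : 𝕜)‖ ^ 2
  have hS : 0 ≤ S := sum_nonneg fun i _ ↦ sq_nonneg _
  have hnorm : ‖y‖ ^ 2 ≤ ∑ i ∈ J, ‖a i‖ * ‖(inner 𝕜 (φ i) y : 𝕜)‖ :=
    calc ‖y‖ ^ 2 = ‖(inner 𝕜 (∑ i ∈ J, a i • φ i) y : 𝕜)‖ := by
          rw [ha, inner_self_eq_norm_sq_to_K]; simp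
      _ = ‖∑ i ∈ J, (starRingEnd 𝕜) (a i) * inner 𝕜 (φ i) y‖ := by
        simp only [sum_inner, inner_smul_left]
      _ ≤ ∑ i ∈ J, ‖a i‖ * ‖(inner 𝕜 (φ i) y : 𝕜)‖ := by
        refine (norm_sum_le _ _).trans (sum_le_sum fun i _ ↦ ?_)
        rw [norm_mul, RCLike.norm_conj]
  have hCS : (∑ i ∈ J, ‖a i‖ * ‖(inner 𝕜 (φ i) y : 𝕜)‖) ^ 2 ≤ (∑ i ∈ J, ‖a i‖ ^ 2) * S :=
    sum_mul_sq_le_sq_mul_sq J _ _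
  have hquartic : ‖y‖ ^ 2 * ‖y‖ ^ 2 ≤ ‖y‖ ^ 2 * (C * S) :=
    calc ‖y‖ ^ 2 * ‖y‖ ^ 2 ≤ (∑ i ∈ J, ‖a i‖ ^ 2) * S := by
          nlinarith [sq_nonneg ‖y‖, hnorm]
      _ ≤ C * ‖y‖ ^ 2 * S := by rw [← ha]; exact mul_le_mul_of_nonneg_right (h a) hS
      _ = ‖y‖ ^ 2 * (C * S) := by ring
  rcases (sq_nonneg ‖y‖).eq_or_lt with hy0 | hypos
  · obtain rfl : y = 0 := by simpa using hy0.symm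
    simp [S]
  · exact le_of_mul_le_mul_left hquartic hypos

end FrameBounds

theorem rip_fusion_frame_general {H : Type*} [NormedAddCommGroup H] [InnerProductSpace ℂ H]
    [FiniteDimensional ℂ H] {N M : ℕ}
    (φ : Fin M → H)
    (htight : ∀ x : H, ∑ i, ‖(inner ℂ (φ i) x : ℂ)‖ ^ 2 = ((M : ℝ) / N) * ‖x‖ ^ 2)
    (ε : ℝ) (hε0 : 0 < ε) (s : ℕ)
    (hRIP : ∀ I : Finset (Fin M), I.card ≤ s → ∀ a : Fin M → ℂ,
      (1 / (1 + ε)) * ∑ i ∈ I, ‖a i‖ ^ 2 ≤ ‖∑ i ∈ I, a i • φ i‖ ^ 2 ∧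
      ‖∑ i ∈ I, a i • φ i‖ ^ 2 ≤ (1 + ε) * ∑ i ∈ I, ‖a i‖ ^ 2)
    {K : ℕ} (I : Fin K → Finset (Fin M))
    (hdisj : ∀ j k, j ≠ k → Disjoint (I j) (I k))
    (hcover : ∀ i, ∃ j, i ∈ I j)
    (hcard : ∀ j, (I j).card ≤ s)
    (x : H) :
    ((M : ℝ) / ((1 + ε) * N)) * ‖x‖ ^ 2 ≤
      ∑ j, ‖(Submodule.orthogonalProjection (Submodule.span ℂ (φ '' ↑(I j))) x : H)‖ ^ 2 ∧
    ∑ j, ‖(Submodule.orthogonalProjection (Submodule.span ℂ (φ '' ↑(I j))) x : H)‖ ^ 2 ≤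
      ((M : ℝ) * (1 + ε) / N) * ‖x‖ ^ 2 := by
  have hpos : 0 < 1 + ε := by linarith
  set P : Fin K → H := fun j ↦
    (Submodule.orthogonalProjection (Submodule.span ℂ (φ '' ↑(I j))) x : H)
  set S : Fin K → ℝ := fun j ↦ ∑ i ∈ I j, ‖(inner ℂ (φ i) x : ℂ)‖ ^ 2
  have htotal : ∑ j, S j = (M : ℝ) / N * ‖x‖ ^ 2 :=
    (sum_sum_eq_sum_of_partition I hdisj hcover _).trans (htight x)
  have hproj : ∀ j, S j = ∑ i ∈ I j, ‖(inner ℂ (φ i) (P j) : ℂ)‖ ^ 2 := fun j ↦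
    sum_congr rfl fun i hi ↦ by
      have hmem : φ i ∈ Submodule.span ℂ (φ '' ↑(I j)) := Submodule.subset_span ⟨i, hi, rfl⟩
      exact congrArg (‖·‖ ^ 2)
        (Submodule.inner_orthogonalProjectionOnto_eq_of_mem_left ⟨_, hmem⟩ x).symm
  have hupper : ∀ j, S j ≤ (1 + ε) * ‖P j‖ ^ 2 := fun j ↦ hproj j ▸
    sum_norm_inner_sq_le_of_norm_sum_sq_le hpos.le (fun a ↦ (hRIP _ (hcard j) a).2) (P j)
  have hlower : ∀ j, ‖P j‖ ^ 2 ≤ (1 + ε) * S j := fun j ↦ hproj j ▸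
    norm_sq_le_mul_sum_norm_inner_sq_of_mem_span
      (fun a ↦ by
        have := (hRIP _ (hcard j) a).1
        rwa [one_div, inv_mul_le_iff₀ hpos] at this)
      (Submodule.coe_mem _)
  have hsum_upper := sum_le_sum fun j (_ : j ∈ univ) ↦ hupper j
  have hsum_lower := sum_le_sum fun j (_ : j ∈ univ) ↦ hlower j
  rw [← mul_sum, htotal] at hsum_upper
  rw [← mul_sum, htotal] at hsum_lower
  constructor
  · rw [show (M : ℝ) / ((1 + ε) * N) * ‖x‖ ^ 2 = (M / N * ‖x‖ ^ 2) / (1 + ε) by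
      rw [mul_comm (1 + ε), ← div_div]; ring, div_le_iff₀ hpos]
    linarith
  · linarith [show (M : ℝ) * (1 + ε) / N * ‖x‖ ^ 2 = (1 + ε) * ((M : ℝ) / N * ‖x‖ ^ 2) by ring]

/-- A unit norm tight frame with RIP constant ε for sets of size s
yields, for any partition into blocks of size ≤ s, a fusion frame of the block
spans with bounds M/((1+ε)N) and M(1+ε)/N. -/
theorem rip_fusion_frame {H : Type*} [NormedAddCommGroup H] [InnerProductSpace ℂ H]
    [FiniteDimensional ℂ H] {N M : ℕ} (hN : Module.finrank ℂ H = N)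
    (φ : Fin M → H) (hnorm : ∀ i, ‖φ i‖ = 1)
    (htight : ∀ x : H, ∑ i, ‖(inner ℂ (φ i) x : ℂ)‖ ^ 2 = ((M : ℝ) / N) * ‖x‖ ^ 2)
    (ε : ℝ) (hε0 : 0 < ε) (hε1 : ε < 1) (s : ℕ) (hsN : s ≤ N)
    (hRIP : ∀ I : Finset (Fin M), I.card ≤ s → ∀ a : Fin M → ℂ,
      (1 / (1 + ε)) * ∑ i ∈ I, ‖a i‖ ^ 2 ≤ ‖∑ i ∈ I, a i • φ i‖ ^ 2 ∧
      ‖∑ i ∈ I, a i • φ i‖ ^ 2 ≤ (1 + ε) * ∑ i ∈ I, ‖a i‖ ^ 2)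
    {K : ℕ} (I : Fin K → Finset (Fin M))
    (hdisj : ∀ j k, j ≠ k → Disjoint (I j) (I k))
    (hcover : ∀ i, ∃ j, i ∈ I j)
    (hcard : ∀ j, (I j).card ≤ s)
    (x : H) :
    ((M : ℝ) / ((1 + ε) * N)) * ‖x‖ ^ 2 ≤
      ∑ j, ‖(Submodule.orthogonalProjection (Submodule.span ℂ (φ '' ↑(I j))) x : H)‖ ^ 2 ∧
    ∑ j, ‖(Submodule.orthogonalProjection (Submodule.span ℂ (φ '' ↑(I j))) x : H)‖ ^ 2 ≤
      ((M : ℝ) * (1 + ε) / N) * ‖x‖ ^ 2 :=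
  rip_fusion_frame_general φ htight ε hε0 s hRIP I hdisj hcover hcard x
end

section
/- Let {φ_i}_{i=1}^M be a unit norm tight frame for an N-dimensional complex Hilbert space H_N which has the restricted isometry property with constant ε (0 < ε < 1) for sets of size s, and let {I_j}_{j=1}^K be a partition of {1,2,…,M} with |I_j| ≤ s/2 for every j. Set W_j = span{φ_i : i ∈ I_j}. Then for any j ≠ k and any unit vectors u ∈ W_j and v ∈ W_k one has |⟨u, v⟩| ≤ 2ε(1+ε)²; that is, the fusion frame {(W_j, 1)}_{j=1}^K is 2ε(1+ε)²-nearly orthogonal. -/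
/-!
Write `u = ∑_{J} aᵢ φᵢ` and `v = ∑_{L} bᵢ φᵢ` with `J`, `L` disjoint, and rotate `v` by a unimodular
`c` so that `⟪u, c • v⟫ = |⟪u, v⟫|`. Then `u ± c • v` are combinations of the `φᵢ` over `J ∪ L`
with the same coefficient mass `S = ∑ |aᵢ|² + ∑ |bᵢ|²`, so the restricted isometry property on
`J ∪ L` gives `2 + 2|⟪u, v⟫| ≤ (1 + ε) S` and `S ≤ (1 + ε) (2 - 2|⟪u, v⟫|)`. Eliminating `S`,
`|⟪u, v⟫| ≤ ((1 + ε)² - 1) / ((1 + ε)² + 1) ≤ 2ε(1 + ε)²`.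
-/

open scoped InnerProductSpace

section RestrictedIsometry

variable {𝕜 E ι : Type*} [RCLike 𝕜] [NormedAddCommGroup E] [InnerProductSpace 𝕜 E]

variable (𝕜) in
def RestrictedIsometryOn (φ : ι → E) (ε : ℝ) (T : Finset ι) : Prop :=
  ∀ a : ι → 𝕜,
    (1 / (1 + ε)) * ∑ i ∈ T, ‖a i‖ ^ 2 ≤ ‖∑ i ∈ T, a i • φ i‖ ^ 2 ∧
    ‖∑ i ∈ T, a i • φ i‖ ^ 2 ≤ (1 + ε) * ∑ i ∈ T, ‖a i‖ ^ 2

theorem Finset.sum_union_piecewise {β M : Type*} [AddCommMonoid M] [DecidableEq ι]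
    {J L : Finset ι} (h : Disjoint J L) (a b : ι → β) (f : ι → β → M) :
    ∑ i ∈ J ∪ L, f i (J.piecewise a b i) = ∑ i ∈ J, f i (a i) + ∑ i ∈ L, f i (b i) := by
  rw [Finset.sum_union h]
  congr 1 <;> refine Finset.sum_congr rfl fun i hi ↦ ?_
  · rw [Finset.piecewise_eq_of_mem _ _ _ hi]
  · rw [Finset.piecewise_eq_of_notMem _ _ _ (Finset.disjoint_right.mp h hi)]

theorem exists_norm_eq_one_re_inner_smul_eq_norm_inner (u v : E) :
    ∃ c : 𝕜, ‖c‖ = 1 ∧ RCLike.re ⟪u, c • v⟫_𝕜 = ‖⟪u, v⟫_𝕜‖ := by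
  obtain ⟨c, hc, hcz⟩ := RCLike.exists_norm_eq_mul_self ⟪u, v⟫_𝕜
  exact ⟨c, hc, by rw [inner_smul_right, ← hcz, RCLike.ofReal_re]⟩

theorem le_of_two_add_le_of_le_two_sub {ε S t : ℝ} (hε : 0 < ε)
    (hupper : 2 + 2 * t ≤ (1 + ε) * S) (hlower : 1 / (1 + ε) * S ≤ 2 - 2 * t) :
    t ≤ 2 * ε * (1 + ε) ^ 2 := by
  have hε1 : 0 < 1 + ε := by linarith
  rw [one_div_mul_eq_div, div_le_iff₀ hε1] at hlower
  have hsq : 2 + 2 * t ≤ (2 - 2 * t) * (1 + ε) ^ 2 := by nlinarith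
  by_contra! h
  nlinarith [mul_lt_mul_of_pos_right h (by positivity : (0 : ℝ) < 2 + 2 * (1 + ε) ^ 2),
    mul_pos hε hε1, pow_pos hε 3, pow_pos hε 4, pow_pos hε 5]

theorem norm_inner_le_of_restrictedIsometryOn [DecidableEq ι] {φ : ι → E} {ε : ℝ} (hε : 0 < ε)
    {J L : Finset ι} (hJL : Disjoint J L)
    (hRIP : RestrictedIsometryOn 𝕜 φ ε (J ∪ L)) {u v : E}
    (hu : u ∈ Submodule.span 𝕜 (φ '' J)) (hv : v ∈ Submodule.span 𝕜 (φ '' L))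
    (hu1 : ‖u‖ = 1) (hv1 : ‖v‖ = 1) :
    ‖⟪u, v⟫_𝕜‖ ≤ 2 * ε * (1 + ε) ^ 2 := by
  obtain ⟨a, hau⟩ := (Submodule.mem_span_image_finset_iff_exists_fun' 𝕜).mp hu
  obtain ⟨b, hbv⟩ := (Submodule.mem_span_image_finset_iff_exists_fun' 𝕜).mp hv
  obtain ⟨c, hc1, hre⟩ := exists_norm_eq_one_re_inner_smul_eq_norm_inner (𝕜 := 𝕜) u v
  set S := ∑ i ∈ J, ‖a i‖ ^ 2 + ∑ i ∈ L, ‖b i‖ ^ 2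
  have hcombine : ∀ d : 𝕜, ‖d‖ = 1 →
      ∑ i ∈ J ∪ L, J.piecewise a (d • b) i • φ i = u + d • v ∧
      ∑ i ∈ J ∪ L, ‖J.piecewise a (d • b) i‖ ^ 2 = S := by
    intro d hd
    refine ⟨?_, ?_⟩
    · rw [Finset.sum_union_piecewise hJL a (d • b) fun i x ↦ x • φ i, ← hau, ← hbv,
        Finset.smul_sum]
      simp only [Pi.smul_apply, smul_eq_mul, mul_smul]
    · rw [Finset.sum_union_piecewise hJL a (d • b) fun _ x ↦ ‖x‖ ^ 2]
      simp only [Pi.smul_apply, smul_eq_mul, norm_mul, hd, one_mul, S]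
  have hcv : ‖c • v‖ = 1 := by rw [norm_smul, hc1, hv1, one_mul]
  have hnegc : ‖-c‖ = 1 := by rw [norm_neg, hc1]
  have hplus : 2 + 2 * ‖⟪u, v⟫_𝕜‖ ≤ (1 + ε) * S := by
    have h := (hRIP (J.piecewise a (c • b))).2
    rw [(hcombine c hc1).1, (hcombine c hc1).2, norm_add_sq (𝕜 := 𝕜), hu1, hcv, hre] at h
    linarith
  have hminus : 1 / (1 + ε) * S ≤ 2 - 2 * ‖⟪u, v⟫_𝕜‖ := by
    have h := (hRIP (J.piecewise a ((-c) • b))).1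
    rw [(hcombine (-c) hnegc).1, (hcombine (-c) hnegc).2, neg_smul, ← sub_eq_add_neg,
      norm_sub_sq (𝕜 := 𝕜), hu1, hcv, hre] at h
    convert h using 1
    ring
  exact le_of_two_add_le_of_le_two_sub hε hplus hminus

end RestrictedIsometry

theorem rip_nearly_orthogonal_fusion_frame_general {H : Type*} [NormedAddCommGroup H]
    [InnerProductSpace ℂ H]
    {M : ℕ}
    (φ : Fin M → H)
    (ε : ℝ) (hε0 : 0 < ε) (s : ℕ)
    (hRIP : ∀ I : Finset (Fin M), I.card ≤ s → ∀ a : Fin M → ℂ,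
      (1 / (1 + ε)) * ∑ i ∈ I, ‖a i‖ ^ 2 ≤ ‖∑ i ∈ I, a i • φ i‖ ^ 2 ∧
      ‖∑ i ∈ I, a i • φ i‖ ^ 2 ≤ (1 + ε) * ∑ i ∈ I, ‖a i‖ ^ 2)
    {K : ℕ} (I : Fin K → Finset (Fin M))
    (hdisj : ∀ j k, j ≠ k → Disjoint (I j) (I k))
    (hcard : ∀ j, ((I j).card : ℝ) ≤ (s : ℝ) / 2) :
    ∀ j k, j ≠ k → ∀ u v : H,
      u ∈ Submodule.span ℂ (φ '' ↑(I j)) → v ∈ Submodule.span ℂ (φ '' ↑(I k)) →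
      ‖u‖ = 1 → ‖v‖ = 1 →
      ‖(inner ℂ u v : ℂ)‖ ≤ 2 * ε * (1 + ε) ^ 2 := by
  intro j k hjk u v hu hv hu1 hv1
  have hunion : (I j ∪ I k).card ≤ s := by
    have hsum : ((I j).card + (I k).card : ℝ) ≤ s := by linarith [hcard j, hcard k]
    exact (Finset.card_union_le _ _).trans (by exact_mod_cast hsum)
  exact norm_inner_le_of_restrictedIsometryOn hε0 (hdisj j k hjk) (hRIP _ hunion) hu hv hu1 hv1

/-- A unit norm tight frame with RIP constant ε for sets of size s,
partitioned into blocks of size ≤ s/2, produces block spans which form a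
2ε(1+ε)²-nearly orthogonal fusion frame. -/
theorem rip_nearly_orthogonal_fusion_frame {H : Type*} [NormedAddCommGroup H]
    [InnerProductSpace ℂ H] [FiniteDimensional ℂ H]
    {N M : ℕ} (hN : Module.finrank ℂ H = N)
    (φ : Fin M → H) (hnorm : ∀ i, ‖φ i‖ = 1)
    (htight : ∀ x : H, ∑ i, ‖(inner ℂ (φ i) x : ℂ)‖ ^ 2 = ((M : ℝ) / N) * ‖x‖ ^ 2)
    (ε : ℝ) (hε0 : 0 < ε) (hε1 : ε < 1) (s : ℕ) (hsN : s ≤ N)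
    (hRIP : ∀ I : Finset (Fin M), I.card ≤ s → ∀ a : Fin M → ℂ,
      (1 / (1 + ε)) * ∑ i ∈ I, ‖a i‖ ^ 2 ≤ ‖∑ i ∈ I, a i • φ i‖ ^ 2 ∧
      ‖∑ i ∈ I, a i • φ i‖ ^ 2 ≤ (1 + ε) * ∑ i ∈ I, ‖a i‖ ^ 2)
    {K : ℕ} (I : Fin K → Finset (Fin M))
    (hdisj : ∀ j k, j ≠ k → Disjoint (I j) (I k))
    (hcover : ∀ i, ∃ j, i ∈ I j)
    (hcard : ∀ j, ((I j).card : ℝ) ≤ (s : ℝ) / 2) :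
    ∀ j k, j ≠ k → ∀ u v : H,
      u ∈ Submodule.span ℂ (φ '' ↑(I j)) → v ∈ Submodule.span ℂ (φ '' ↑(I k)) →
      ‖u‖ = 1 → ‖v‖ = 1 →
      ‖(inner ℂ u v : ℂ)‖ ≤ 2 * ε * (1 + ε) ^ 2 :=
  rip_nearly_orthogonal_fusion_frame_general φ ε hε0 s hRIP I hdisj hcard
end

section
/- Let W_1, W_2 be subspaces of an N-dimensional complex Hilbert space H_N, let 0 < ε < 1, and let T : W_1 → W_2 be a surjective linear map satisfying ‖φ − Tφ‖² ≤ ε‖φ‖² for all φ ∈ W_1. Let P_1 be the orthogonal projection of H_N onto W_1. Then ‖ψ − P_1ψ‖² ≤ (4ε/(1−ε)²) ‖ψ‖² for all ψ ∈ W_2. -/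
/-!
Write `ψ = Tφ` and `s = √ε`. Then `‖φ - ψ‖ ≤ s‖φ‖`, so `(1 - s)‖φ‖ ≤ ‖ψ‖`, and since `φ ∈ W₁`
the distance from `ψ` to `W₁` is at most `‖ψ - φ‖ ≤ s‖φ‖ ≤ s/(1 - s) ‖ψ‖`. Squaring, and using
`(1 - ε)² = (1 - s)²(1 + s)² ≤ 4(1 - s)²`, gives the bound.
-/

open Submodule

theorem mul_norm_le_norm_of_norm_sub_le {E : Type*} [SeminormedAddCommGroup E] {x y : E} {s : ℝ}
    (h : ‖x - y‖ ≤ s * ‖x‖) : (1 - s) * ‖x‖ ≤ ‖y‖ := by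
  linarith [norm_sub_norm_le x y]

theorem sq_le_four_mul_sq_div_of_mul_le {a b s : ℝ} (hs0 : 0 ≤ s) (hs1 : s < 1) (ha : 0 ≤ a)
    (h : (1 - s) * a ≤ s * b) : a ^ 2 ≤ 4 * s ^ 2 / (1 - s ^ 2) ^ 2 * b ^ 2 := by
  have hsq : ((1 - s) * a) ^ 2 ≤ (s * b) ^ 2 := pow_le_pow_left₀ (by nlinarith) h 2
  have hfactor : (1 + s) ^ 2 ≤ 4 := by nlinarith
  rw [div_mul_eq_mul_div, le_div_iff₀ (pow_pos (by nlinarith) 2)]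
  calc a ^ 2 * (1 - s ^ 2) ^ 2 = ((1 - s) * a) ^ 2 * (1 + s) ^ 2 := by ring
    _ ≤ (s * b) ^ 2 * 4 := mul_le_mul hsq hfactor (by positivity) (by positivity)
    _ = 4 * s ^ 2 * b ^ 2 := by ring

section Projection

variable {𝕜 E : Type*} [RCLike 𝕜] [NormedAddCommGroup E] [InnerProductSpace 𝕜 E]
  (K : Submodule 𝕜 E) [K.HasOrthogonalProjection]

theorem norm_sub_starProjection_le_norm_sub {x : E} (hx : x ∈ K) (y : E) :
    ‖y - K.starProjection y‖ ≤ ‖y - x‖ := by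
  rw [starProjection_minimal]
  exact ciInf_le ⟨0, by rintro _ ⟨z, rfl⟩; positivity⟩ (⟨x, hx⟩ : K)

theorem mul_norm_sub_starProjection_le {x y : E} (hx : x ∈ K) {s : ℝ} (hs0 : 0 ≤ s) (hs1 : s ≤ 1)
    (h : ‖x - y‖ ≤ s * ‖x‖) : (1 - s) * ‖y - K.starProjection y‖ ≤ s * ‖y‖ :=
  calc (1 - s) * ‖y - K.starProjection y‖ ≤ (1 - s) * (s * ‖x‖) := by
        gcongr
        exact (norm_sub_starProjection_le_norm_sub K hx y).trans ((norm_sub_rev y x).trans_le h)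
    _ = s * ((1 - s) * ‖x‖) := by ring
    _ ≤ s * ‖y‖ := by gcongr; exact mul_norm_le_norm_of_norm_sub_le h

theorem norm_sub_starProjection_sq_le {x y : E} (hx : x ∈ K) {ε : ℝ} (hε0 : 0 ≤ ε) (hε1 : ε < 1)
    (h : ‖x - y‖ ^ 2 ≤ ε * ‖x‖ ^ 2) :
    ‖y - K.starProjection y‖ ^ 2 ≤ 4 * ε / (1 - ε) ^ 2 * ‖y‖ ^ 2 := by
  obtain ⟨s, hs0, rfl⟩ : ∃ s, 0 ≤ s ∧ s ^ 2 = ε := ⟨√ε, Real.sqrt_nonneg ε, Real.sq_sqrt hε0⟩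
  have hs1 : s < 1 := by nlinarith
  have hsx : ‖x - y‖ ≤ s * ‖x‖ := by
    rw [← mul_pow] at h
    exact pow_le_pow_iff_left₀ (norm_nonneg _) (by positivity) two_ne_zero |>.mp h
  exact sq_le_four_mul_sq_div_of_mul_le hs0 hs1 (norm_nonneg _)
    (mul_norm_sub_starProjection_le K hx hs0 hs1.le hsx)

end Projection

/-- If T : W₁ → W₂ is a surjective linear map with ‖φ − Tφ‖² ≤ ε‖φ‖²,
then every ψ ∈ W₂ satisfies ‖ψ − P₁ψ‖² ≤ (4ε/(1−ε)²)‖ψ‖², where P₁ is the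
orthogonal projection onto W₁. -/
theorem near_identity_projection_bound {H : Type*} [NormedAddCommGroup H]
    [InnerProductSpace ℂ H] [FiniteDimensional ℂ H]
    (W₁ W₂ : Submodule ℂ H) (ε : ℝ) (hε0 : 0 < ε) (hε1 : ε < 1)
    (T : W₁ →ₗ[ℂ] W₂) (hsurj : Function.Surjective T)
    (hT : ∀ φ : W₁, ‖(φ : H) - ((T φ : W₂) : H)‖ ^ 2 ≤ ε * ‖(φ : H)‖ ^ 2) :
    ∀ ψ : W₂, ‖(ψ : H) - ((Submodule.orthogonalProjection W₁ (ψ : H) : W₁) : H)‖ ^ 2 ≤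
      (4 * ε / (1 - ε) ^ 2) * ‖(ψ : H)‖ ^ 2 := by
  intro ψ
  obtain ⟨φ, rfl⟩ := hsurj ψ
  exact norm_sub_starProjection_sq_le W₁ φ.2 hε0.le hε1 (hT φ)
end

section
/- Let W_1, W_2 be subspaces of an N-dimensional complex Hilbert space H_N, let 0 < ε < 1, and let T : W_1 → W_2 be a surjective linear map satisfying ‖φ − Tφ‖² ≤ ε‖φ‖² for all φ ∈ W_1. Let P_1 be the orthogonal projection of H_N onto W_1. Then ‖P_1ψ‖² ≥ (1 − 4ε/(1−ε)²) ‖ψ‖² for all ψ ∈ W_2. -/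
/-!
Write `ψ = Tφ`. The hypothesis says `‖φ - ψ‖ ≤ √ε ‖φ‖`, so `(1 - √ε) ‖φ‖ ≤ ‖ψ‖` and hence
`(1 - ε) ‖ψ - φ‖ ≤ (1 + √ε) √ε ‖ψ‖ ≤ 2 √ε ‖ψ‖`. Since `φ ∈ W₁`, the distance from `ψ` to `W₁`
is at most `‖ψ - φ‖`, and Pythagoras `‖ψ‖² = ‖P₁ψ‖² + dist(ψ, W₁)²` gives the bound.
-/

theorem Submodule.norm_sq_sub_norm_sub_sq_le_norm_starProjection_sq {𝕜 E : Type*} [RCLike 𝕜]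
    [NormedAddCommGroup E] [InnerProductSpace 𝕜 E] (K : Submodule 𝕜 E) [K.HasOrthogonalProjection]
    (x : E) {v : E} (hv : v ∈ K) :
    ‖x‖ ^ 2 - ‖x - v‖ ^ 2 ≤ ‖K.starProjection x‖ ^ 2 := by
  have hpyth := K.norm_sq_eq_add_norm_sq_starProjection x
  rw [starProjection_orthogonal_val] at hpyth
  have hmin : ‖x - K.starProjection x‖ ≤ ‖x - v‖ := by
    rw [starProjection_minimal]
    exact ciInf_le ⟨0, Set.forall_mem_range.2 fun _ => norm_nonneg _⟩ (⟨v, hv⟩ : K)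
  have := pow_le_pow_left₀ (norm_nonneg _) hmin 2
  linarith

theorem mul_norm_sub_le_of_norm_sub_sq_le {E : Type*} [SeminormedAddCommGroup E] {x y : E}
    {ε : ℝ} (hε : 0 ≤ ε) (h : ‖x - y‖ ^ 2 ≤ ε * ‖x‖ ^ 2) :
    (1 - ε) * ‖x - y‖ ≤ 2 * √ε * ‖y‖ := by
  set s := √ε
  have hs : s ^ 2 = ε := Real.sq_sqrt hε
  have hs0 : 0 ≤ s := Real.sqrt_nonneg ε
  have hxy : ‖x - y‖ ≤ s * ‖x‖ :=
    (pow_le_pow_iff_left₀ (norm_nonneg _) (by positivity) two_ne_zero).1 (by rwa [mul_pow, hs])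
  have hsy : (1 - s) * ‖x - y‖ ≤ s * ‖y‖ := by
    nlinarith [norm_le_norm_add_norm_sub' x y]
  rw [← hs]
  rcases le_total s 1 with hs1 | hs1
  · calc (1 - s ^ 2) * ‖x - y‖ = (1 + s) * ((1 - s) * ‖x - y‖) := by ring
      _ ≤ (1 + s) * (s * ‖y‖) := by gcongr
      _ ≤ 2 * s * ‖y‖ := by nlinarith [mul_nonneg hs0 (norm_nonneg y)]
  · calc (1 - s ^ 2) * ‖x - y‖ ≤ 0 := mul_nonpos_of_nonpos_of_nonneg (by nlinarith) (norm_nonneg _)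
      _ ≤ 2 * s * ‖y‖ := by positivity

theorem norm_sub_sq_le_of_norm_sub_sq_le {E : Type*} [SeminormedAddCommGroup E] {x y : E}
    {ε : ℝ} (hε0 : 0 ≤ ε) (hε1 : ε < 1) (h : ‖x - y‖ ^ 2 ≤ ε * ‖x‖ ^ 2) :
    ‖x - y‖ ^ 2 ≤ 4 * ε / (1 - ε) ^ 2 * ‖y‖ ^ 2 := by
  have hpos : 0 < (1 - ε) ^ 2 := by nlinarith
  have hsq := pow_le_pow_left₀ (by nlinarith [norm_nonneg (x - y)])
    (mul_norm_sub_le_of_norm_sub_sq_le hε0 h) 2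
  rw [mul_pow, mul_pow, mul_pow, Real.sq_sqrt hε0] at hsq
  rw [div_mul_eq_mul_div, le_div_iff₀ hpos]
  linarith

/-- If T : W₁ → W₂ is a surjective linear map with ‖φ − Tφ‖² ≤ ε‖φ‖²,
then every ψ ∈ W₂ satisfies ‖P₁ψ‖² ≥ (1 − 4ε/(1−ε)²)‖ψ‖², where P₁ is the
orthogonal projection onto W₁. -/
theorem near_identity_projection_lower_bound {H : Type*} [NormedAddCommGroup H]
    [InnerProductSpace ℂ H] [FiniteDimensional ℂ H]
    (W₁ W₂ : Submodule ℂ H) (ε : ℝ) (hε0 : 0 < ε) (hε1 : ε < 1)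
    (T : W₁ →ₗ[ℂ] W₂) (hsurj : Function.Surjective T)
    (hT : ∀ φ : W₁, ‖(φ : H) - ((T φ : W₂) : H)‖ ^ 2 ≤ ε * ‖(φ : H)‖ ^ 2) :
    ∀ ψ : W₂, (1 - 4 * ε / (1 - ε) ^ 2) * ‖(ψ : H)‖ ^ 2 ≤
      ‖((Submodule.orthogonalProjection W₁ (ψ : H) : W₁) : H)‖ ^ 2 := by
  intro ψ
  obtain ⟨φ, rfl⟩ := hsurj ψ
  have hclose := norm_sub_sq_le_of_norm_sub_sq_le hε0.le hε1 (hT φ)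
  have hproj := W₁.norm_sq_sub_norm_sub_sq_le_norm_starProjection_sq (T φ : H) φ.2
  rw [norm_sub_rev] at hproj
  change _ ≤ ‖W₁.starProjection (T φ : H)‖ ^ 2
  linarith
end

section
/- Let {φ_i}_{i=1}^M be a family of vectors in an N-dimensional complex Hilbert space H_N with the restricted isometry property with constant ε (0 < ε < 1) for sets of size s. Partition {1,…,M} into sets {I_j}_{j=1}^K with |I_j| ≤ s for all j, and for each j let S_j denote the frame operator of {φ_i}_{i∈I_j} regarded as a positive invertible operator on W_j = span{φ_i : i ∈ I_j}. Fix K_1 ≤ K and define ψ_i = S_j^{−1/2} φ_i for i ∈ I_j with j ≤ K_1, and ψ_i = φ_i for i ∈ I_j with K_1+1 ≤ j ≤ K. Then for every J ⊆ {1,…,M} with |J| ≤ s and all scalars (a_i)_{i∈J}: ‖Σ_{i∈J} a_i ψ_i‖ ≤ [(1+ε)^{3/2} + 4ε(1+ε)√K_1] (Σ_{i∈J} |a_i|²)^{1/2}. -/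
set_option maxSynthPendingDepth 3

/-!
On a block `I_j` the RIP makes the synthesis map of `(φ_i)_{i ∈ I_j}` a `(1 + ε)`-near isometry
onto `W_j`, so the frame operator satisfies `(1 + ε)⁻¹ ≤ S_j ≤ 1 + ε` and hence
`‖S_j^{-1/2} - 1‖ ≤ ε`. Writing `∑ a_i ψ_i = ∑ a_i φ_i + ∑_{j < K₁} (S_j^{-1/2} - 1) x_j` with
`x_j = ∑_{i ∈ J ∩ I_j} a_i φ_i`, the first term has norm at most `√(1 + ε) ‖a‖` and the `j`-th
correction at most `ε √(1 + ε) ‖a|_{J ∩ I_j}‖`; Cauchy–Schwarz over the at most `K₁` corrected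
blocks gives `(1 + ε √K₁) √(1 + ε) ‖a‖`, which is below the stated constant.
-/

open scoped InnerProductSpace

lemma abs_inv_sqrt_sub_one_le {ε t : ℝ} (hε : 0 ≤ ε) (hlo : 1 / (1 + ε) ≤ t)
    (hhi : t ≤ 1 + ε) : |(√t)⁻¹ - 1| ≤ ε := by
  have ht : 0 < t := (by positivity : (0 : ℝ) < 1 / (1 + ε)).trans_le hlo
  have hu : ((√t)⁻¹) ^ 2 * t = 1 := by
    rw [inv_pow, Real.sq_sqrt ht.le, inv_mul_cancel₀ ht.ne']
  have hu0 : 0 < (√t)⁻¹ := by positivity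
  rw [div_le_iff₀ (by positivity)] at hlo
  rw [abs_le]
  constructor <;> nlinarith [sq_nonneg ((√t)⁻¹ - 1), mul_pos hu0 ht]

lemma IsSelfAdjoint.norm_cfc_inv_sqrt_sub_one_le {A : Type*} [CStarAlgebra A] [PartialOrder A]
    [StarOrderedRing A] {a : A} (ha : IsSelfAdjoint a) {ε : ℝ} (hε : 0 ≤ ε)
    (hlo : algebraMap ℝ A (1 / (1 + ε)) ≤ a) (hhi : a ≤ algebraMap ℝ A (1 + ε)) :
    ‖cfc (fun t : ℝ => (√t)⁻¹) a - 1‖ ≤ ε := by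
  have hspec : ∀ t ∈ spectrum ℝ a, 1 / (1 + ε) ≤ t ∧ t ≤ 1 + ε := fun t ht =>
    ⟨(algebraMap_le_iff_le_spectrum ha).mp hlo t ht,
      (le_algebraMap_iff_spectrum_le ha).mp hhi t ht⟩
  have hcont : ContinuousOn (fun t : ℝ => (√t)⁻¹) (spectrum ℝ a) :=
    Real.continuous_sqrt.continuousOn.inv₀ fun t ht =>
      (Real.sqrt_pos.mpr ((by positivity : (0 : ℝ) < 1 / (1 + ε)).trans_le (hspec t ht).1)).ne'
  rw [← cfc_one ℝ a, ← cfc_sub _ _ a hcont]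
  exact norm_cfc_le hε fun t ht => by
    simpa using abs_inv_sqrt_sub_one_le hε (hspec t ht).1 (hspec t ht).2

namespace ContinuousLinearMap

variable {E : Type*} [NormedAddCommGroup E] [InnerProductSpace ℂ E]

lemma re_inner_algebraMap_apply_self (r : ℝ) (x : E) :
    RCLike.re ⟪algebraMap ℝ (E →L[ℂ] E) r x, x⟫_ℂ = r * ‖x‖ ^ 2 := by
  rw [algebraMap_apply, RCLike.real_smul_eq_coe_smul (K := ℂ), inner_smul_real_left,
    RCLike.smul_re, inner_self_eq_norm_sq]

lemma isSymmetric_algebraMap (r : ℝ) :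
    (algebraMap ℝ (E →L[ℂ] E) r : E →ₗ[ℂ] E).IsSymmetric := fun x y => by
  rw [coe_coe, algebraMap_apply, algebraMap_apply, RCLike.real_smul_eq_coe_smul (K := ℂ),
    RCLike.real_smul_eq_coe_smul (K := ℂ), inner_smul_real_left, inner_smul_real_right]

lemma algebraMap_le_of_le_re_inner {T : E →L[ℂ] E} (hT : (T : E →ₗ[ℂ] E).IsSymmetric) {r : ℝ}
    (h : ∀ x, r * ‖x‖ ^ 2 ≤ RCLike.re ⟪T x, x⟫_ℂ) : algebraMap ℝ (E →L[ℂ] E) r ≤ T := by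
  refine ⟨hT.sub (isSymmetric_algebraMap r), fun x => ?_⟩
  rw [reApplyInnerSelf_apply, sub_apply, inner_sub_left, map_sub, re_inner_algebraMap_apply_self]
  linarith [h x]

lemma le_algebraMap_of_re_inner_le {T : E →L[ℂ] E} (hT : (T : E →ₗ[ℂ] E).IsSymmetric) {r : ℝ}
    (h : ∀ x, RCLike.re ⟪T x, x⟫_ℂ ≤ r * ‖x‖ ^ 2) : T ≤ algebraMap ℝ (E →L[ℂ] E) r := by
  refine ⟨(isSymmetric_algebraMap r).sub hT, fun x => ?_⟩
  rw [reApplyInnerSelf_apply, sub_apply, inner_sub_left, map_sub, re_inner_algebraMap_apply_self]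
  linarith [h x]

end ContinuousLinearMap

open Finset

section Frame

variable {H : Type*} [NormedAddCommGroup H] [InnerProductSpace ℂ H] {ι : Type*}

lemma inner_sum_inner_smul_self (s : Finset ι) (φ : ι → H) (x : H) :
    ⟪∑ i ∈ s, ⟪φ i, x⟫_ℂ • φ i, x⟫_ℂ = ((∑ i ∈ s, ‖⟪φ i, x⟫_ℂ‖ ^ 2 : ℝ) : ℂ) := by
  rw [sum_inner, Complex.ofReal_sum]
  refine sum_congr rfl fun i _ => ?_
  rw [inner_smul_left, Complex.conj_mul', Complex.ofReal_pow]

lemma sum_norm_inner_sq_le {s : Finset ι} {φ : ι → H} {B : ℝ} (hB : 0 ≤ B)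
    (hφ : ∀ c : ι → ℂ, ‖∑ i ∈ s, c i • φ i‖ ^ 2 ≤ B * ∑ i ∈ s, ‖c i‖ ^ 2) (x : H) :
    ∑ i ∈ s, ‖⟪φ i, x⟫_ℂ‖ ^ 2 ≤ B * ‖x‖ ^ 2 := by
  set y := ∑ i ∈ s, ⟪φ i, x⟫_ℂ • φ i
  set q := ∑ i ∈ s, ‖⟪φ i, x⟫_ℂ‖ ^ 2
  have hq0 : 0 ≤ q := by positivity
  have hqy : q ≤ ‖y‖ * ‖x‖ := by
    have h := re_inner_le_norm (𝕜 := ℂ) y x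
    rwa [inner_sum_inner_smul_self] at h
  have hy : ‖y‖ ^ 2 ≤ B * q := hφ _
  nlinarith [mul_le_mul hqy hqy hq0 (by positivity), mul_le_mul_of_nonneg_right hy (sq_nonneg ‖x‖),
    mul_nonneg hB (sq_nonneg ‖x‖)]

lemma le_sum_norm_inner_sq {s : Finset ι} {φ : ι → H} {A : ℝ} (hA : 0 < A)
    (hφ : ∀ c : ι → ℂ, A * ∑ i ∈ s, ‖c i‖ ^ 2 ≤ ‖∑ i ∈ s, c i • φ i‖ ^ 2) {x : H}
    (hx : x ∈ Submodule.span ℂ (φ '' s)) :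
    A * ‖x‖ ^ 2 ≤ ∑ i ∈ s, ‖⟪φ i, x⟫_ℂ‖ ^ 2 := by
  obtain ⟨c, hc⟩ := (Submodule.mem_span_image_finset_iff_exists_fun' ℂ).mp hx
  set q := ∑ i ∈ s, ‖⟪φ i, x⟫_ℂ‖ ^ 2
  set m := ∑ i ∈ s, ‖c i‖ * ‖⟪φ i, x⟫_ℂ‖
  have hxm : ‖x‖ ^ 2 ≤ m := by
    calc ‖x‖ ^ 2 = RCLike.re ⟪∑ i ∈ s, c i • φ i, x⟫_ℂ := by rw [hc, inner_self_eq_norm_sq]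
      _ ≤ ‖⟪∑ i ∈ s, c i • φ i, x⟫_ℂ‖ := RCLike.re_le_norm _
      _ ≤ m := by
        rw [sum_inner]
        refine (norm_sum_le _ _).trans_eq (sum_congr rfl fun i _ => ?_)
        rw [inner_smul_left, norm_mul, RCLike.norm_conj]
  have hCS : m ^ 2 ≤ (∑ i ∈ s, ‖c i‖ ^ 2) * q := sum_mul_sq_le_sq_mul_sq _ _ _
  have hc' : A * ∑ i ∈ s, ‖c i‖ ^ 2 ≤ ‖x‖ ^ 2 := hc ▸ hφ c
  have hkey : A * ‖x‖ ^ 2 * ‖x‖ ^ 2 ≤ q * ‖x‖ ^ 2 := by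
    calc A * ‖x‖ ^ 2 * ‖x‖ ^ 2 = A * (‖x‖ ^ 2) ^ 2 := by ring
      _ ≤ A * ((∑ i ∈ s, ‖c i‖ ^ 2) * q) :=
        mul_le_mul_of_nonneg_left ((pow_le_pow_left₀ (by positivity) hxm 2).trans hCS) hA.le
      _ ≤ q * ‖x‖ ^ 2 := by nlinarith [mul_le_mul_of_nonneg_right hc' (by positivity : 0 ≤ q)]
  rcases (sq_nonneg ‖x‖).eq_or_lt with hx0 | hx0
  · rw [← hx0, mul_zero]
    positivity
  · exact le_of_mul_le_mul_right hkey hx0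

def IsFrameOperator (s : Finset ι) (φ : ι → H) {W : Submodule ℂ H} (S : W →L[ℂ] W) : Prop :=
  ∀ x : W, (S x : H) = ∑ i ∈ s, ⟪φ i, (x : H)⟫_ℂ • φ i

namespace IsFrameOperator

variable {s : Finset ι} {φ : ι → H} {W : Submodule ℂ H} {S : W →L[ℂ] W}

lemma re_inner_apply_self (hS : IsFrameOperator s φ S) (x : W) :
    RCLike.re ⟪S x, x⟫_ℂ = ∑ i ∈ s, ‖⟪φ i, (x : H)⟫_ℂ‖ ^ 2 := by
  rw [Submodule.coe_inner, hS, inner_sum_inner_smul_self]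
  exact Complex.ofReal_re _

lemma isSymmetric (hS : IsFrameOperator s φ S) : (S : W →ₗ[ℂ] W).IsSymmetric := fun x y => by
  rw [ContinuousLinearMap.coe_coe, Submodule.coe_inner, Submodule.coe_inner, hS, hS, sum_inner,
    inner_sum]
  refine sum_congr rfl fun i _ => ?_
  rw [inner_smul_left, inner_smul_right, inner_conj_symm, mul_comm]

lemma norm_cfc_inv_sqrt_sub_one_le [CompleteSpace W] (hS : IsFrameOperator s φ S)
    (hW : W ≤ Submodule.span ℂ (φ '' s)) {ε : ℝ} (hε : 0 ≤ ε)
    (hφ : ∀ c : ι → ℂ, (1 / (1 + ε)) * ∑ i ∈ s, ‖c i‖ ^ 2 ≤ ‖∑ i ∈ s, c i • φ i‖ ^ 2 ∧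
      ‖∑ i ∈ s, c i • φ i‖ ^ 2 ≤ (1 + ε) * ∑ i ∈ s, ‖c i‖ ^ 2) :
    ‖cfc (fun t : ℝ => (√t)⁻¹) S - 1‖ ≤ ε := by
  have hε1 : 0 < 1 + ε := by linarith
  refine (ContinuousLinearMap.isSelfAdjoint_iff_isSymmetric.mpr hS.isSymmetric
    ).norm_cfc_inv_sqrt_sub_one_le hε ?_ ?_
  · refine ContinuousLinearMap.algebraMap_le_of_le_re_inner hS.isSymmetric fun x => ?_
    rw [hS.re_inner_apply_self]
    exact le_sum_norm_inner_sq (by positivity) (fun c => (hφ c).1) (hW x.2)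
  · refine ContinuousLinearMap.le_algebraMap_of_re_inner_le hS.isSymmetric fun x => ?_
    rw [hS.re_inner_apply_self]
    exact sum_norm_inner_sq_le hε1.le (fun c => (hφ c).2) x

end IsFrameOperator

end Frame

lemma Finset.sum_sum_inter_eq_of_partition {ι κ M : Type*} [DecidableEq ι] [Fintype κ]
    [AddCommMonoid M] {I : κ → Finset ι} (hdisj : ∀ j k, j ≠ k → Disjoint (I j) (I k))
    (hcover : ∀ i, ∃ j, i ∈ I j) (J : Finset ι) (f : ι → M) :
    ∑ j, ∑ i ∈ J ∩ I j, f i = ∑ i ∈ J, f i := by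
  rw [← sum_biUnion (s := univ) (t := fun j => J ∩ I j) fun j _ k _ hjk =>
    (hdisj j k hjk).mono inter_subset_right inter_subset_right]
  congr 1
  ext i
  obtain ⟨j, hj⟩ := hcover i
  simpa using fun _ => ⟨j, hj⟩

lemma norm_sum_smul_le_opNorm_mul {𝕜 E ι : Type*} [NontriviallyNormedField 𝕜]
    [NormedAddCommGroup E] [NormedSpace 𝕜 E] {W : Submodule 𝕜 E} (L : W →L[𝕜] W)
    {F : Finset ι} {φ ψ : ι → E} (hφ : ∀ i ∈ F, φ i ∈ W)
    (hψ : ∀ i (hi : i ∈ F), ψ i = L ⟨φ i, hφ i hi⟩) (a : ι → 𝕜) :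
    ‖∑ i ∈ F, a i • ψ i‖ ≤ ‖L‖ * ‖∑ i ∈ F, a i • φ i‖ := by
  set x : W := ∑ i ∈ F.attach, a i • ⟨φ i, hφ i i.2⟩
  have hx : (x : E) = ∑ i ∈ F, a i • φ i := by
    simp only [x, Submodule.coe_sum, Submodule.coe_smul]
    exact sum_attach F fun i => a i • φ i
  have hLx : (L x : E) = ∑ i ∈ F, a i • ψ i := by
    simp only [x, map_sum, map_smul, Submodule.coe_sum, Submodule.coe_smul]
    rw [← sum_attach F fun i => a i • ψ i]
    exact sum_congr rfl fun i _ => by rw [hψ i i.2]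
  rw [← hx, ← hLx]
  exact L.le_opNorm x

lemma norm_sum_smul_le_of_blockwise {𝕜 E ι κ : Type*} [NormedField 𝕜] [NormedAddCommGroup E]
    [Module 𝕜 E] [DecidableEq ι] [Fintype κ] {I : κ → Finset ι}
    (hdisj : ∀ j k, j ≠ k → Disjoint (I j) (I k)) (hcover : ∀ i, ∃ j, i ∈ I j)
    {φ ψ : ι → E} {J : Finset ι} {a : ι → 𝕜} {T : Finset κ} {B δ : ℝ} (hδ : 0 ≤ δ)
    (hφ : ∀ F ⊆ J, ‖∑ i ∈ F, a i • φ i‖ ^ 2 ≤ B * ∑ i ∈ F, ‖a i‖ ^ 2)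
    (hT : ∀ j ∈ T, ‖∑ i ∈ J ∩ I j, a i • (ψ i - φ i)‖ ≤ δ * ‖∑ i ∈ J ∩ I j, a i • φ i‖)
    (hTc : ∀ j ∉ T, ∀ i ∈ I j, ψ i = φ i) :
    ‖∑ i ∈ J, a i • ψ i‖ ≤ (1 + δ * √(#T : ℝ)) * √B * √(∑ i ∈ J, ‖a i‖ ^ 2) := by
  set r : κ → ℝ := fun j => ∑ i ∈ J ∩ I j, ‖a i‖ ^ 2
  have hup : ∀ F ⊆ J, ‖∑ i ∈ F, a i • φ i‖ ≤ √B * √(∑ i ∈ F, ‖a i‖ ^ 2) := fun F hF => by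
    rw [← Real.sqrt_mul' _ (by positivity)]
    exact Real.le_sqrt_of_sq_le (hφ F hF)
  have hsplit : ∑ i ∈ J, a i • ψ i =
      ∑ i ∈ J, a i • φ i + ∑ j ∈ T, ∑ i ∈ J ∩ I j, a i • (ψ i - φ i) := by
    rw [sum_subset (subset_univ T) fun j _ hj => sum_eq_zero fun i hi => by
        rw [hTc j hj i (mem_inter.1 hi).2, sub_self, smul_zero],
      sum_sum_inter_eq_of_partition hdisj hcover, ← sum_add_distrib]
    simp only [smul_sub, add_sub_cancel]
  have hCS : ∑ j ∈ T, √(r j) ≤ √(#T : ℝ) * √(∑ i ∈ J, ‖a i‖ ^ 2) := by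
    calc ∑ j ∈ T, √(r j) = ∑ j ∈ T, √1 * √(r j) := by simp
      _ ≤ √(∑ j ∈ T, 1) * √(∑ j ∈ T, r j) :=
        Real.sum_sqrt_mul_sqrt_le T (fun _ => zero_le_one) fun j => by positivity
      _ ≤ √(#T : ℝ) * √(∑ i ∈ J, ‖a i‖ ^ 2) := by
        rw [sum_const, nsmul_one, ← sum_sum_inter_eq_of_partition hdisj hcover J]
        gcongr
        exact subset_univ T
  calc ‖∑ i ∈ J, a i • ψ i‖
      ≤ ‖∑ i ∈ J, a i • φ i‖ + ∑ j ∈ T, ‖∑ i ∈ J ∩ I j, a i • (ψ i - φ i)‖ := by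
        rw [hsplit]
        exact (norm_add_le _ _).trans (add_le_add le_rfl (norm_sum_le _ _))
    _ ≤ √B * √(∑ i ∈ J, ‖a i‖ ^ 2) + ∑ j ∈ T, δ * (√B * √(r j)) :=
        add_le_add (hup J subset_rfl) (sum_le_sum fun j hj =>
          (hT j hj).trans (mul_le_mul_of_nonneg_left (hup _ inter_subset_left) hδ))
    _ = √B * √(∑ i ∈ J, ‖a i‖ ^ 2) + δ * √B * ∑ j ∈ T, √(r j) := by
        rw [mul_sum]
        exact congrArg _ (sum_congr rfl fun j _ => by ring)
    _ ≤ √B * √(∑ i ∈ J, ‖a i‖ ^ 2) + δ * √B * (√(#T : ℝ) * √(∑ i ∈ J, ‖a i‖ ^ 2)) := by gcongr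
    _ = (1 + δ * √(#T : ℝ)) * √B * √(∑ i ∈ J, ‖a i‖ ^ 2) := by ring

lemma one_add_mul_sqrt_mul_sqrt_le {ε : ℝ} (hε : 0 ≤ ε) {n m : ℕ} (hnm : n ≤ m) :
    (1 + ε * √(n : ℝ)) * √(1 + ε) ≤ (1 + ε) ^ ((3 : ℝ) / 2) + 4 * ε * (1 + ε) * √(m : ℝ) := by
  have hsqrt : √(1 + ε) ≤ 1 + ε := Real.sqrt_le_self_iff.mpr (Or.inr (by linarith))
  have hrpow : 1 + ε ≤ (1 + ε) ^ ((3 : ℝ) / 2) := by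
    simpa using Real.rpow_le_rpow_of_exponent_le (by linarith : (1 : ℝ) ≤ 1 + ε)
      (by norm_num : (1 : ℝ) ≤ 3 / 2)
  have hnm' : √(n : ℝ) ≤ √(m : ℝ) := Real.sqrt_le_sqrt (by exact_mod_cast hnm)
  calc (1 + ε * √(n : ℝ)) * √(1 + ε) = √(1 + ε) + ε * √(n : ℝ) * √(1 + ε) := by ring
    _ ≤ (1 + ε) ^ ((3 : ℝ) / 2) + ε * √(m : ℝ) * (1 + ε) := by gcongr; linarith
    _ ≤ (1 + ε) ^ ((3 : ℝ) / 2) + 4 * ε * (1 + ε) * √(m : ℝ) := by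
      nlinarith [mul_nonneg (mul_nonneg hε (by linarith : (0 : ℝ) ≤ 1 + ε))
        (Real.sqrt_nonneg (m : ℝ))]

theorem rip_orthonormal_replacement_upper_general {H : Type*} [NormedAddCommGroup H]
    [InnerProductSpace ℂ H] [FiniteDimensional ℂ H]
    {M : ℕ} (φ : Fin M → H) (ε : ℝ) (hε0 : 0 < ε) (s : ℕ)
    (hRIP : ∀ I : Finset (Fin M), I.card ≤ s → ∀ a : Fin M → ℂ,
      (1 / (1 + ε)) * ∑ i ∈ I, ‖a i‖ ^ 2 ≤ ‖∑ i ∈ I, a i • φ i‖ ^ 2 ∧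
      ‖∑ i ∈ I, a i • φ i‖ ^ 2 ≤ (1 + ε) * ∑ i ∈ I, ‖a i‖ ^ 2)
    {K : ℕ} (I : Fin K → Finset (Fin M))
    (hdisj : ∀ j k, j ≠ k → Disjoint (I j) (I k))
    (hcover : ∀ i, ∃ j, i ∈ I j)
    (hcard : ∀ j, (I j).card ≤ s)
    (W : Fin K → Submodule ℂ H)
    (hW : ∀ j, W j = Submodule.span ℂ (φ '' ↑(I j)))
    (hmem : ∀ j, ∀ i ∈ I j, φ i ∈ W j)
    (S : ∀ j, (W j) →L[ℂ] (W j))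
    (hS : ∀ j (x : W j), ((S j x : W j) : H) = ∑ i ∈ I j, (inner ℂ (φ i) (x : H) : ℂ) • φ i)
    (K₁ : ℕ)
    (ψ : Fin M → H)
    (hψ : ∀ (j : Fin K) (i : Fin M) (hi : i ∈ I j),
      ψ i = if (j : ℕ) < K₁
        then (((cfc (fun t : ℝ => (Real.sqrt t)⁻¹) (S j)) ⟨φ i, hmem j i hi⟩ : W j) : H)
        else φ i)
    (J : Finset (Fin M)) (hJ : J.card ≤ s) (a : Fin M → ℂ) :
    ‖∑ i ∈ J, a i • ψ i‖ ≤
      ((1 + ε) ^ ((3 : ℝ) / 2) + 4 * ε * (1 + ε) * Real.sqrt K₁) *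
        Real.sqrt (∑ i ∈ J, ‖a i‖ ^ 2) := by
  have hop : ∀ j, ‖cfc (fun t : ℝ => (√t)⁻¹) (S j) - 1‖ ≤ ε := fun j =>
    IsFrameOperator.norm_cfc_inv_sqrt_sub_one_le (hS j) (hW j).le hε0.le (hRIP (I j) (hcard j))
  set T : Finset (Fin K) := {j | (j : ℕ) < K₁}
  have hblock : ∀ j ∈ T, ‖∑ i ∈ J ∩ I j, a i • (ψ i - φ i)‖ ≤ ε * ‖∑ i ∈ J ∩ I j, a i • φ i‖ :=
    fun j hj => (norm_sum_smul_le_opNorm_mul _ (fun i hi => hmem j i (mem_inter.1 hi).2)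
      (fun i hi => by rw [hψ j i (mem_inter.1 hi).2, if_pos (mem_filter.1 hj).2]; rfl) a).trans
      (mul_le_mul_of_nonneg_right (hop j) (norm_nonneg _))
  have hrest : ∀ j ∉ T, ∀ i ∈ I j, ψ i = φ i := fun j hj i hi => by
    rw [hψ j i hi, if_neg fun h => hj (mem_filter.2 ⟨mem_univ j, h⟩)]
  refine (norm_sum_smul_le_of_blockwise hdisj hcover hε0.le
    (fun F hF => (hRIP F ((card_le_card hF).trans hJ) a).2) hblock hrest).trans
    (mul_le_mul_of_nonneg_right ?_ (Real.sqrt_nonneg _))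
  exact one_add_mul_sqrt_mul_sqrt_le hε0.le (Fin.card_filter_val_lt.trans_le (min_le_right _ _))

/-- upper bound: Replacing the first K₁ blocks of an RIP family by the
orthonormal sets S_j^{−1/2}φ_i keeps an upper RIP-type bound with constant
(1+ε)^{3/2} + 4ε(1+ε)√K₁. -/
theorem rip_orthonormal_replacement_upper {H : Type*} [NormedAddCommGroup H]
    [InnerProductSpace ℂ H] [FiniteDimensional ℂ H]
    {N : ℕ} (hN : Module.finrank ℂ H = N)
    {M : ℕ} (φ : Fin M → H) (ε : ℝ) (hε0 : 0 < ε) (hε1 : ε < 1) (s : ℕ)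
    (hRIP : ∀ I : Finset (Fin M), I.card ≤ s → ∀ a : Fin M → ℂ,
      (1 / (1 + ε)) * ∑ i ∈ I, ‖a i‖ ^ 2 ≤ ‖∑ i ∈ I, a i • φ i‖ ^ 2 ∧
      ‖∑ i ∈ I, a i • φ i‖ ^ 2 ≤ (1 + ε) * ∑ i ∈ I, ‖a i‖ ^ 2)
    {K : ℕ} (I : Fin K → Finset (Fin M))
    (hdisj : ∀ j k, j ≠ k → Disjoint (I j) (I k))
    (hcover : ∀ i, ∃ j, i ∈ I j)
    (hcard : ∀ j, (I j).card ≤ s)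
    (W : Fin K → Submodule ℂ H)
    (hW : ∀ j, W j = Submodule.span ℂ (φ '' ↑(I j)))
    (hmem : ∀ j, ∀ i ∈ I j, φ i ∈ W j)
    (S : ∀ j, (W j) →L[ℂ] (W j))
    (hS : ∀ j (x : W j), ((S j x : W j) : H) = ∑ i ∈ I j, (inner ℂ (φ i) (x : H) : ℂ) • φ i)
    (K₁ : ℕ) (hK₁ : K₁ ≤ K)
    (ψ : Fin M → H)
    (hψ : ∀ (j : Fin K) (i : Fin M) (hi : i ∈ I j),
      ψ i = if (j : ℕ) < K₁
        then (((cfc (fun t : ℝ => (Real.sqrt t)⁻¹) (S j)) ⟨φ i, hmem j i hi⟩ : W j) : H)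
        else φ i)
    (J : Finset (Fin M)) (hJ : J.card ≤ s) (a : Fin M → ℂ) :
    ‖∑ i ∈ J, a i • ψ i‖ ≤
      ((1 + ε) ^ ((3 : ℝ) / 2) + 4 * ε * (1 + ε) * Real.sqrt K₁) *
        Real.sqrt (∑ i ∈ J, ‖a i‖ ^ 2) :=
  rip_orthonormal_replacement_upper_general φ ε hε0 s hRIP I hdisj hcover hcard W hW hmem S hS K₁ ψ
    hψ J hJ a
end

section
/- For each i in an index set I, let v_i > 0, let W_i be a closed subspace of a complex Hilbert space H, and let {φ_ij}_{j∈J_i} be a frame for W_i with frame bounds A_i, B_i. Assume 0 < A = inf_i A_i and B = sup_i B_i < ∞. If {(W_i, v_i)}_{i∈I} is a fusion frame for H with fusion frame bounds C, D, then {v_i φ_ij}_{i∈I, j∈J_i} is a frame for H with frame bounds AC, BD. -/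
/-!
Since `φ i j ∈ W i`, we have `⟪v i • φ i j, x⟫ = v i * ⟪φ i j, P_i x⟫`, so the frame bounds of the
`i`-th family give `A v_i² ‖P_i x‖² ≤ ∑_j |⟪v_i φ_ij, x⟫|² ≤ B v_i² ‖P_i x‖²`. Summing over `i`
and applying the fusion frame bounds to `∑_i v_i² ‖P_i x‖²` yields the claim. The positive lower
bounds also supply the summability that `tsum` needs, a non-summable family having sum `0`.
-/

open scoped InnerProductSpace

theorem summable_of_tsum_ne_zero {α β : Type*} [AddCommMonoid α] [TopologicalSpace α]
    {f : β → α} (h : ∑' b, f b ≠ 0) : Summable f :=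
  not_not.mp (mt tsum_eq_zero_of_not_summable h)

theorem tsum_sigma_bounds_of_fiberwise_bounds {ι : Type*} {J : ι → Type*}
    {f : (Σ i, J i) → ℝ} {g : ι → ℝ} {a b : ℝ} (hf : ∀ p, 0 ≤ f p)
    (hfib : ∀ i, Summable fun j => f ⟨i, j⟩) (hg : Summable g)
    (hlow : ∀ i, a * g i ≤ ∑' j, f ⟨i, j⟩) (hup : ∀ i, ∑' j, f ⟨i, j⟩ ≤ b * g i) :
    a * ∑' i, g i ≤ ∑' p, f p ∧ ∑' p, f p ≤ b * ∑' i, g i := by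
  have hfibsum : Summable fun i => ∑' j, f ⟨i, j⟩ :=
    (hg.mul_left b).of_nonneg_of_le (fun i => tsum_nonneg fun j => hf _) hup
  have hsum : Summable f := (summable_sigma_of_nonneg hf).2 ⟨hfib, hfibsum⟩
  rw [hsum.tsum_sigma, ← tsum_mul_left, ← tsum_mul_left]
  exact ⟨(hg.mul_left a).tsum_le_tsum hlow hfibsum, hfibsum.tsum_le_tsum hup (hg.mul_left b)⟩

section Frames

variable {𝕜 E : Type*} [RCLike 𝕜] [NormedAddCommGroup E] [InnerProductSpace 𝕜 E]
  {J : Type*}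

def HasFrameBounds (K : Submodule 𝕜 E) (φ : J → E) (a b : ℝ) : Prop :=
  ∀ y ∈ K, a * ‖y‖ ^ 2 ≤ ∑' j, ‖⟪φ j, y⟫_𝕜‖ ^ 2 ∧ ∑' j, ‖⟪φ j, y⟫_𝕜‖ ^ 2 ≤ b * ‖y‖ ^ 2

theorem HasFrameBounds.mono {K : Submodule 𝕜 E} {φ : J → E} {a b a' b' : ℝ}
    (h : HasFrameBounds K φ a b) (ha : a' ≤ a) (hb : b ≤ b') : HasFrameBounds K φ a' b' :=
  fun y hy =>
    ⟨(mul_le_mul_of_nonneg_right ha (sq_nonneg _)).trans (h y hy).1,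
      (h y hy).2.trans (mul_le_mul_of_nonneg_right hb (sq_nonneg _))⟩

theorem Submodule.inner_starProjection_eq_of_mem_left (K : Submodule 𝕜 E)
    [K.HasOrthogonalProjection] {w : E} (hw : w ∈ K) (x : E) :
    ⟪w, K.starProjection x⟫_𝕜 = ⟪w, x⟫_𝕜 := by
  rw [← inner_starProjection_left_eq_right, K.starProjection_eq_self_iff.mpr hw]

variable {K : Submodule 𝕜 E} [K.HasOrthogonalProjection] {φ : J → E} {a b : ℝ}

theorem HasFrameBounds.starProjection (h : HasFrameBounds K φ a b) (hφ : ∀ j, φ j ∈ K)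
    (x : E) :
    a * ‖K.starProjection x‖ ^ 2 ≤ ∑' j, ‖⟪φ j, x⟫_𝕜‖ ^ 2 ∧
      ∑' j, ‖⟪φ j, x⟫_𝕜‖ ^ 2 ≤ b * ‖K.starProjection x‖ ^ 2 := by
  simpa only [K.inner_starProjection_eq_of_mem_left (hφ _)] using
    h _ (K.starProjection_apply_mem x)

theorem HasFrameBounds.summable (h : HasFrameBounds K φ a b) (hφ : ∀ j, φ j ∈ K) (ha : 0 < a)
    (x : E) : Summable fun j => ‖⟪φ j, x⟫_𝕜‖ ^ 2 := by
  rcases eq_or_ne (K.starProjection x) 0 with hx | hx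
  · have hzero : ∀ j, ⟪φ j, x⟫_𝕜 = 0 := fun j => by
      rw [← K.inner_starProjection_eq_of_mem_left (hφ j), hx, inner_zero_right]
    simp [hzero]
  · exact summable_of_tsum_ne_zero
      ((lt_of_lt_of_le (by positivity) (h.starProjection hφ x).1).ne')

theorem norm_inner_ofReal_smul_left_sq (c : ℝ) (w x : E) :
    ‖⟪(c : 𝕜) • w, x⟫_𝕜‖ ^ 2 = c ^ 2 * ‖⟪w, x⟫_𝕜‖ ^ 2 := by
  rw [inner_smul_left, norm_mul, RCLike.norm_conj, RCLike.norm_ofReal, mul_pow, sq_abs]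

theorem HasFrameBounds.ofReal_smul_starProjection (h : HasFrameBounds K φ a b)
    (hφ : ∀ j, φ j ∈ K) (c : ℝ) (x : E) :
    a * (c ^ 2 * ‖K.starProjection x‖ ^ 2) ≤ ∑' j, ‖⟪(c : 𝕜) • φ j, x⟫_𝕜‖ ^ 2 ∧
      ∑' j, ‖⟪(c : 𝕜) • φ j, x⟫_𝕜‖ ^ 2 ≤ b * (c ^ 2 * ‖K.starProjection x‖ ^ 2) := by
  obtain ⟨hlow, hup⟩ := h.starProjection hφ x
  simp only [norm_inner_ofReal_smul_left_sq, tsum_mul_left]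
  rw [mul_left_comm a, mul_left_comm b]
  exact ⟨mul_le_mul_of_nonneg_left hlow (sq_nonneg c),
    mul_le_mul_of_nonneg_left hup (sq_nonneg c)⟩

end Frames

theorem fusion_frame_to_frame_general {H : Type*} [NormedAddCommGroup H]
    [InnerProductSpace ℂ H]
    {ι : Type*} (v : ι → ℝ)
    (W : ι → Submodule ℂ H) [∀ i, CompleteSpace (W i)]
    {J : ι → Type*} (φ : ∀ i, J i → H) (hmem : ∀ i j, φ i j ∈ W i)
    (A B : ℝ) (Ai Bi : ι → ℝ) (hA : 0 < A)
    (hAle : ∀ i, A ≤ Ai i) (hBle : ∀ i, Bi i ≤ B)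
    (hframe : ∀ i, ∀ x ∈ W i,
      Ai i * ‖x‖ ^ 2 ≤ ∑' j, ‖(inner ℂ (φ i j) x : ℂ)‖ ^ 2 ∧
      ∑' j, ‖(inner ℂ (φ i j) x : ℂ)‖ ^ 2 ≤ Bi i * ‖x‖ ^ 2)
    (C D : ℝ) (hC : 0 < C)
    (hfusion : ∀ x : H,
      C * ‖x‖ ^ 2 ≤ ∑' i, v i ^ 2 * ‖((W i).orthogonalProjection x : H)‖ ^ 2 ∧
      ∑' i, v i ^ 2 * ‖((W i).orthogonalProjection x : H)‖ ^ 2 ≤ D * ‖x‖ ^ 2) :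
    ∀ x : H,
      A * C * ‖x‖ ^ 2 ≤ ∑' p : Σ i, J i, ‖(inner ℂ ((v p.1 : ℂ) • φ p.1 p.2) x : ℂ)‖ ^ 2 ∧
      ∑' p : Σ i, J i, ‖(inner ℂ ((v p.1 : ℂ) • φ p.1 p.2) x : ℂ)‖ ^ 2 ≤ B * D * ‖x‖ ^ 2 := by
  intro x
  rcases eq_or_ne x 0 with rfl | hx
  · simp
  have hbounds i : HasFrameBounds (W i) (φ i) A B :=
    HasFrameBounds.mono (hframe i) (hAle i) (hBle i)
  obtain ⟨hCS, hSD⟩ := hfusion x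
  -- The lemmas above are stated with `RCLike.ofReal`, which unifies with `Complex.ofReal`
  -- only by expensive unfolding.
  simp_rw [← RCLike.ofReal_eq_complex_ofReal]
  have hS : 0 < ∑' i, v i ^ 2 * ‖(W i).starProjection x‖ ^ 2 :=
    lt_of_lt_of_le (by positivity) hCS
  obtain ⟨hlow, hup⟩ := tsum_sigma_bounds_of_fiberwise_bounds
    (f := fun p => ‖⟪(RCLike.ofReal (v p.1) : ℂ) • φ p.1 p.2, x⟫_ℂ‖ ^ 2)
    (g := fun i => v i ^ 2 * ‖(W i).starProjection x‖ ^ 2) (fun _ => sq_nonneg _)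
    (fun i => by simpa only [norm_inner_ofReal_smul_left_sq] using
      ((hbounds i).summable (hmem i) hA x).mul_left (v i ^ 2))
    (summable_of_tsum_ne_zero hS.ne')
    (fun i => ((hbounds i).ofReal_smul_starProjection (hmem i) (v i) x).1)
    (fun i => ((hbounds i).ofReal_smul_starProjection (hmem i) (v i) x).2)
  have hB : 0 < B := hA.trans_le (le_of_mul_le_mul_right (hlow.trans hup) hS)
  constructor
  · calc A * C * ‖x‖ ^ 2 = A * (C * ‖x‖ ^ 2) := mul_assoc _ _ _
      _ ≤ _ := mul_le_mul_of_nonneg_left hCS hA.le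
      _ ≤ _ := hlow
  · calc _ ≤ _ := hup
      _ ≤ B * (D * ‖x‖ ^ 2) := mul_le_mul_of_nonneg_left hSD hB.le
      _ = B * D * ‖x‖ ^ 2 := (mul_assoc _ _ _).symm

/-- If {φ_ij}_j is a frame for W_i with bounds A_i, B_i, where
0 < A ≤ A_i and B_i ≤ B for all i, and {(W_i, v_i)} is a fusion frame with bounds
C, D, then {v_i φ_ij} is a frame for H with bounds AC, BD. -/
theorem fusion_frame_to_frame {H : Type*} [NormedAddCommGroup H]
    [InnerProductSpace ℂ H] [CompleteSpace H]
    {ι : Type*} (v : ι → ℝ) (hv : ∀ i, 0 < v i)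
    (W : ι → Submodule ℂ H) [∀ i, CompleteSpace (W i)]
    {J : ι → Type*} (φ : ∀ i, J i → H) (hmem : ∀ i j, φ i j ∈ W i)
    (A B : ℝ) (Ai Bi : ι → ℝ) (hA : 0 < A)
    (hAle : ∀ i, A ≤ Ai i) (hBle : ∀ i, Bi i ≤ B)
    (hframe : ∀ i, ∀ x ∈ W i,
      Ai i * ‖x‖ ^ 2 ≤ ∑' j, ‖(inner ℂ (φ i j) x : ℂ)‖ ^ 2 ∧
      ∑' j, ‖(inner ℂ (φ i j) x : ℂ)‖ ^ 2 ≤ Bi i * ‖x‖ ^ 2)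
    (C D : ℝ) (hC : 0 < C) (hCD : C ≤ D)
    (hfusion : ∀ x : H,
      C * ‖x‖ ^ 2 ≤ ∑' i, v i ^ 2 * ‖((W i).orthogonalProjection x : H)‖ ^ 2 ∧
      ∑' i, v i ^ 2 * ‖((W i).orthogonalProjection x : H)‖ ^ 2 ≤ D * ‖x‖ ^ 2) :
    ∀ x : H,
      A * C * ‖x‖ ^ 2 ≤ ∑' p : Σ i, J i, ‖(inner ℂ ((v p.1 : ℂ) • φ p.1 p.2) x : ℂ)‖ ^ 2 ∧
      ∑' p : Σ i, J i, ‖(inner ℂ ((v p.1 : ℂ) • φ p.1 p.2) x : ℂ)‖ ^ 2 ≤ B * D * ‖x‖ ^ 2 :=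
  fusion_frame_to_frame_general v W φ hmem A B Ai Bi hA hAle hBle hframe C D hC hfusion
end

section
/- For each i in an index set I, let v_i > 0, let W_i be a closed subspace of a complex Hilbert space H, and let {φ_ij}_{j∈J_i} be a frame for W_i with frame bounds A_i, B_i. Assume 0 < A = inf_i A_i and B = sup_i B_i < ∞. If {v_i φ_ij}_{i∈I, j∈J_i} is a frame for H with frame bounds C, D, then {(W_i, v_i)}_{i∈I} is a fusion frame for H with fusion frame bounds C/B, D/A. -/
/-!
Since `φ i j ∈ W i`, we have `⟪φ i j, x⟫ = ⟪φ i j, P_i x⟫`, so the frame bounds of the `i`-th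
block give `A v_i² ‖P_i x‖² ≤ ∑_j |⟪v_i φ i j, x⟫|² ≤ B v_i² ‖P_i x‖²`. Summing over `i` and
comparing with the frame bounds `C, D` of the whole family yields the fusion frame bounds.
-/

open scoped InnerProductSpace

section SigmaBounds

variable {ι : Type*} {J : ι → Type*} {f : ι → ℝ} {g : (Σ i, J i) → ℝ} {a : ℝ}

theorem Summable.of_mul_le_tsum_sigma (hg : Summable g) (ha : 0 < a) (hf : ∀ i, 0 ≤ f i)
    (h : ∀ i, a * f i ≤ ∑' j, g ⟨i, j⟩) : Summable f :=
  (hg.sigma.div_const a).of_nonneg_of_le hf fun i => (le_div_iff₀' ha).2 (h i)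

theorem mul_tsum_le_tsum_sigma (hg : Summable g) (hf : Summable f)
    (h : ∀ i, a * f i ≤ ∑' j, g ⟨i, j⟩) : a * ∑' i, f i ≤ ∑' p, g p := by
  rw [← tsum_mul_left, hg.tsum_sigma]
  exact (hf.mul_left a).tsum_le_tsum h hg.sigma

theorem tsum_sigma_le_mul_tsum (hg : Summable g) (hf : Summable f)
    (h : ∀ i, ∑' j, g ⟨i, j⟩ ≤ a * f i) : ∑' p, g p ≤ a * ∑' i, f i := by
  rw [← tsum_mul_left, hg.tsum_sigma]
  exact hg.sigma.tsum_le_tsum h (hf.mul_left a)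

end SigmaBounds

section Frames

variable {𝕜 E : Type*} [RCLike 𝕜] [NormedAddCommGroup E] [InnerProductSpace 𝕜 E]

theorem Submodule.inner_coe_orthogonalProjectionOnto_of_mem (K : Submodule 𝕜 E)
    [K.HasOrthogonalProjection] {u : E} (hu : u ∈ K) (x : E) :
    ⟪u, (K.orthogonalProjectionOnto x : E)⟫_𝕜 = ⟪u, x⟫_𝕜 :=
  (K.coe_inner ⟨u, hu⟩ _).symm.trans (K.inner_orthogonalProjectionOnto_eq_of_mem_left ⟨u, hu⟩ x)

theorem tsum_norm_inner_ofReal_smul_left_sq {J : Type*} (c : ℝ) (φ : J → E) (x : E) :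
    ∑' j, ‖⟪(c : 𝕜) • φ j, x⟫_𝕜‖ ^ 2 = c ^ 2 * ∑' j, ‖⟪φ j, x⟫_𝕜‖ ^ 2 := by
  simp only [inner_smul_left, norm_mul, RCLike.norm_conj, RCLike.norm_ofReal, mul_pow, sq_abs,
    tsum_mul_left]

theorem frame_bounds_orthogonalProjectionOnto {J : Type*} (K : Submodule 𝕜 E)
    [K.HasOrthogonalProjection] {φ : J → E} (hmem : ∀ j, φ j ∈ K) {a b : ℝ}
    (hframe : ∀ y ∈ K, a * ‖y‖ ^ 2 ≤ ∑' j, ‖⟪φ j, y⟫_𝕜‖ ^ 2 ∧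
      ∑' j, ‖⟪φ j, y⟫_𝕜‖ ^ 2 ≤ b * ‖y‖ ^ 2) (x : E) :
    a * ‖(K.orthogonalProjectionOnto x : E)‖ ^ 2 ≤ ∑' j, ‖⟪φ j, x⟫_𝕜‖ ^ 2 ∧
      ∑' j, ‖⟪φ j, x⟫_𝕜‖ ^ 2 ≤ b * ‖(K.orthogonalProjectionOnto x : E)‖ ^ 2 := by
  simpa only [K.inner_coe_orthogonalProjectionOnto_of_mem (hmem _)] using
    hframe _ (K.orthogonalProjectionOnto x).2

theorem frame_bounds_smul_orthogonalProjectionOnto {J : Type*} (K : Submodule 𝕜 E)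
    [K.HasOrthogonalProjection] {φ : J → E} (hmem : ∀ j, φ j ∈ K) {a b : ℝ}
    (hframe : ∀ y ∈ K, a * ‖y‖ ^ 2 ≤ ∑' j, ‖⟪φ j, y⟫_𝕜‖ ^ 2 ∧
      ∑' j, ‖⟪φ j, y⟫_𝕜‖ ^ 2 ≤ b * ‖y‖ ^ 2) (c : ℝ) (x : E) :
    a * (c ^ 2 * ‖(K.orthogonalProjectionOnto x : E)‖ ^ 2) ≤
        ∑' j, ‖⟪(c : 𝕜) • φ j, x⟫_𝕜‖ ^ 2 ∧
      ∑' j, ‖⟪(c : 𝕜) • φ j, x⟫_𝕜‖ ^ 2 ≤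
        b * (c ^ 2 * ‖(K.orthogonalProjectionOnto x : E)‖ ^ 2) := by
  obtain ⟨hlow, hup⟩ := frame_bounds_orthogonalProjectionOnto K hmem hframe x
  have hc := sq_nonneg c
  rw [tsum_norm_inner_ofReal_smul_left_sq, mul_left_comm a, mul_left_comm b]
  exact ⟨mul_le_mul_of_nonneg_left hlow hc, mul_le_mul_of_nonneg_left hup hc⟩

end Frames

theorem frame_to_fusion_frame_general {H : Type*} [NormedAddCommGroup H]
    [InnerProductSpace ℂ H]
    {ι : Type*} (v : ι → ℝ)
    (W : ι → Submodule ℂ H) [∀ i, CompleteSpace (W i)]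
    {J : ι → Type*} (φ : ∀ i, J i → H) (hmem : ∀ i j, φ i j ∈ W i)
    (A B : ℝ) (Ai Bi : ι → ℝ) (hA : 0 < A)
    (hAle : ∀ i, A ≤ Ai i) (hBle : ∀ i, Bi i ≤ B)
    (hframe : ∀ i, ∀ x ∈ W i,
      Ai i * ‖x‖ ^ 2 ≤ ∑' j, ‖(inner ℂ (φ i j) x : ℂ)‖ ^ 2 ∧
      ∑' j, ‖(inner ℂ (φ i j) x : ℂ)‖ ^ 2 ≤ Bi i * ‖x‖ ^ 2)
    (C D : ℝ) (hC : 0 < C)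
    (hframeH : ∀ x : H,
      C * ‖x‖ ^ 2 ≤ ∑' p : Σ i, J i, ‖(inner ℂ ((v p.1 : ℂ) • φ p.1 p.2) x : ℂ)‖ ^ 2 ∧
      ∑' p : Σ i, J i, ‖(inner ℂ ((v p.1 : ℂ) • φ p.1 p.2) x : ℂ)‖ ^ 2 ≤ D * ‖x‖ ^ 2) :
    ∀ x : H,
      C / B * ‖x‖ ^ 2 ≤ ∑' i, v i ^ 2 * ‖(Submodule.orthogonalProjection (W i) x : H)‖ ^ 2 ∧
      ∑' i, v i ^ 2 * ‖(Submodule.orthogonalProjection (W i) x : H)‖ ^ 2 ≤ D / A * ‖x‖ ^ 2 := by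
  intro x
  rcases eq_or_ne x 0 with rfl | hx
  · simp
  obtain ⟨hCg, hgD⟩ := hframeH x
  set g : (Σ i, J i) → ℝ := fun p => ‖(inner ℂ ((v p.1 : ℂ) • φ p.1 p.2) x : ℂ)‖ ^ 2
  set f : ι → ℝ := fun i => v i ^ 2 * ‖((W i).orthogonalProjectionOnto x : H)‖ ^ 2
  have hfiber (i : ι) : A * f i ≤ ∑' j, g ⟨i, j⟩ ∧ ∑' j, g ⟨i, j⟩ ≤ B * f i := by
    refine frame_bounds_smul_orthogonalProjectionOnto (W i) (hmem i) (fun y hy => ?_) (v i) x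
    have hy2 := sq_nonneg ‖y‖
    exact ⟨(mul_le_mul_of_nonneg_right (hAle i) hy2).trans (hframe i y hy).1,
      (hframe i y hy).2.trans (mul_le_mul_of_nonneg_right (hBle i) hy2)⟩
  have hCx : 0 < C * ‖x‖ ^ 2 := by positivity
  -- a non-summable family has `tsum` equal to `0`, which the lower frame bound excludes
  have hg : Summable g := by
    by_contra hg
    rw [tsum_eq_zero_of_not_summable hg] at hCg
    exact hCg.not_gt hCx
  have hf : Summable f := hg.of_mul_le_tsum_sigma hA (fun i => by positivity) (hfiber · |>.1)
  have hgB := tsum_sigma_le_mul_tsum hg hf (hfiber · |>.2)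
  have hAg := mul_tsum_le_tsum_sigma hg hf (hfiber · |>.1)
  have hB : 0 < B :=
    pos_of_mul_pos_left (hCx.trans_le (hCg.trans hgB)) (tsum_nonneg fun i => by positivity)
  constructor
  · rw [div_mul_eq_mul_div, div_le_iff₀ hB]
    linarith
  · rw [div_mul_eq_mul_div, le_div_iff₀ hA]
    linarith

/-- If {φ_ij}_j is a frame for W_i with bounds A_i, B_i, where
0 < A ≤ A_i and B_i ≤ B for all i, and {v_i φ_ij} is a frame for H with bounds C, D,
then {(W_i, v_i)} is a fusion frame with bounds C/B, D/A. -/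
theorem frame_to_fusion_frame {H : Type*} [NormedAddCommGroup H]
    [InnerProductSpace ℂ H] [CompleteSpace H]
    {ι : Type*} (v : ι → ℝ) (hv : ∀ i, 0 < v i)
    (W : ι → Submodule ℂ H) [∀ i, CompleteSpace (W i)]
    {J : ι → Type*} (φ : ∀ i, J i → H) (hmem : ∀ i j, φ i j ∈ W i)
    (A B : ℝ) (Ai Bi : ι → ℝ) (hA : 0 < A)
    (hAle : ∀ i, A ≤ Ai i) (hBle : ∀ i, Bi i ≤ B)
    (hframe : ∀ i, ∀ x ∈ W i,
      Ai i * ‖x‖ ^ 2 ≤ ∑' j, ‖(inner ℂ (φ i j) x : ℂ)‖ ^ 2 ∧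
      ∑' j, ‖(inner ℂ (φ i j) x : ℂ)‖ ^ 2 ≤ Bi i * ‖x‖ ^ 2)
    (C D : ℝ) (hC : 0 < C) (hCD : C ≤ D)
    (hframeH : ∀ x : H,
      C * ‖x‖ ^ 2 ≤ ∑' p : Σ i, J i, ‖(inner ℂ ((v p.1 : ℂ) • φ p.1 p.2) x : ℂ)‖ ^ 2 ∧
      ∑' p : Σ i, J i, ‖(inner ℂ ((v p.1 : ℂ) • φ p.1 p.2) x : ℂ)‖ ^ 2 ≤ D * ‖x‖ ^ 2) :
    ∀ x : H,
      C / B * ‖x‖ ^ 2 ≤ ∑' i, v i ^ 2 * ‖(Submodule.orthogonalProjection (W i) x : H)‖ ^ 2 ∧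
      ∑' i, v i ^ 2 * ‖(Submodule.orthogonalProjection (W i) x : H)‖ ^ 2 ≤ D / A * ‖x‖ ^ 2 :=
  frame_to_fusion_frame_general v W φ hmem A B Ai Bi hA hAle hBle hframe C D hC hframeH
end
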